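/- arXiv:1507.01382 — 4 statements merged into one kernel-verified Lean document; each statement's English description precedes it below -/
import Mathlib

section
/- Let H = (C, f, D, g) be a hybrid system on ℝⁿ and let A ⊆ C ∪ D be such that every maximal solution of H with initial value in A has its range contained in A (strong forward pre-invariance). Then for any hybrid arc φ with φ(0,0) ∈ A: φ is a maximal solution of H if and only if φ is a maximal solution of H ∩ A, where H ∩ A is the hybrid system with flow set C ∩ A, flow map f, jump set D ∩ A and jump map g. In particular, the maximal solutions of H starting in A coincide with the maximal solutions of H ∩ A starting in A. -/
open Set MeasureTheory Filter Metric

noncomputable section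

/-- A function `φ : ℝ → E` is absolutely continuous on the interval `[a, b]` if for every
`ε > 0` there is `δ > 0` such that for every finite collection of nonoverlapping subintervals
`[cᵢ, dᵢ] ⊆ [a, b]` of total length less than `δ`, the total variation
`∑ ‖φ(dᵢ) - φ(cᵢ)‖` is less than `ε`. -/
def AbsolutelyContinuousOnIcc {E : Type*} [NormedAddCommGroup E]
    (φ : ℝ → E) (a b : ℝ) : Prop :=
  ∀ ε > (0 : ℝ), ∃ δ > (0 : ℝ), ∀ (m : ℕ) (c d : Fin m → ℝ),
    (∀ i, a ≤ c i ∧ c i ≤ d i ∧ d i ≤ b) →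
    (∀ i j, i ≠ j → Disjoint (Set.Ioo (c i) (d i)) (Set.Ioo (c j) (d j))) →
    (∑ i, (d i - c i)) < δ → (∑ i, ‖φ (d i) - φ (c i)‖) < ε

/-- `φ : ℝ → E` is locally absolutely continuous on a set `s ⊆ ℝ` if it is absolutely
continuous on every compact interval contained in `s`. -/
def LocallyAbsolutelyContinuousOn {E : Type*} [NormedAddCommGroup E]
    (φ : ℝ → E) (s : Set ℝ) : Prop :=
  ∀ a b : ℝ, a ≤ b → Set.Icc a b ⊆ s → AbsolutelyContinuousOnIcc φ a b

/-- A hybrid time domain: a union of intervals `[tⱼ, tⱼ₊₁] × {j}` with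
`0 = t₀ ≤ t₁ ≤ t₂ ≤ ⋯`, finitely or infinitely many, the last one (if it exists) possibly of
the form `[t_J, T)` with `T` finite or `T = ∞`. -/
def IsHybridTimeDomain (E' : Set (ℝ × ℕ)) : Prop :=
  ∃ t : ℕ → ℝ, t 0 = 0 ∧ Monotone t ∧
    ((E' = ⋃ j : ℕ, Set.Icc (t j) (t (j + 1)) ×ˢ ({j} : Set ℕ)) ∨
      ∃ J : ℕ,
        (E' = (⋃ j ∈ Set.Iio J, Set.Icc (t j) (t (j + 1)) ×ˢ ({j} : Set ℕ)) ∪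
            Set.Icc (t J) (t (J + 1)) ×ˢ ({J} : Set ℕ)) ∨
        (E' = (⋃ j ∈ Set.Iio J, Set.Icc (t j) (t (j + 1)) ×ˢ ({j} : Set ℕ)) ∪
            Set.Ici (t J) ×ˢ ({J} : Set ℕ)) ∨
        ∃ T : ℝ, t J ≤ T ∧
          E' = (⋃ j ∈ Set.Iio J, Set.Icc (t j) (t (j + 1)) ×ˢ ({j} : Set ℕ)) ∪
            Set.Ico (t J) T ×ˢ ({J} : Set ℕ))

/-- A hybrid system `H = (C, f, D, g)` on `ℝ^d`: flow set `C`, flow map `f`, jump set `D`,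
jump map `g` (the maps are given as total functions; only their values on `C` resp. `D`
are relevant). -/
structure HybridSystem (d : ℕ) where
  C : Set (EuclideanSpace ℝ (Fin d))
  f : EuclideanSpace ℝ (Fin d) → EuclideanSpace ℝ (Fin d)
  D : Set (EuclideanSpace ℝ (Fin d))
  g : EuclideanSpace ℝ (Fin d) → EuclideanSpace ℝ (Fin d)

/-- A hybrid arc: a function on a hybrid time domain which is locally absolutely continuous
in `t` on each slice `I^j = {t : (t, j) ∈ dom}`. -/
structure HybridArc (d : ℕ) where
  dom : Set (ℝ × ℕ)
  toFun : ℝ → ℕ → EuclideanSpace ℝ (Fin d)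
  isHTD : IsHybridTimeDomain dom
  locAC : ∀ j : ℕ, LocallyAbsolutelyContinuousOn (fun t => toFun t j) {t | (t, j) ∈ dom}

/-- A hybrid arc `φ` is a solution of the hybrid system `H`. -/
def IsSolution {d : ℕ} (H : HybridSystem d) (φ : HybridArc d) : Prop :=
  (0, 0) ∈ φ.dom ∧ φ.toFun 0 0 ∈ closure H.C ∪ H.D ∧
  (∀ j : ℕ, (interior {t | (t, j) ∈ φ.dom}).Nonempty →
    (∀ t ∈ interior {t | (t, j) ∈ φ.dom}, φ.toFun t j ∈ H.C) ∧
    (∀ᵐ t ∂(volume.restrict {t | (t, j) ∈ φ.dom}),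
      HasDerivAt (fun s => φ.toFun s j) (H.f (φ.toFun t j)) t)) ∧
  (∀ t : ℝ, ∀ j : ℕ, (t, j) ∈ φ.dom → (t, j + 1) ∈ φ.dom →
    φ.toFun t j ∈ H.D ∧ φ.toFun t (j + 1) = H.g (φ.toFun t j))

/-- A solution is maximal if it cannot be extended to a solution on a strictly larger
hybrid time domain. -/
def IsMaximalSolution {d : ℕ} (H : HybridSystem d) (φ : HybridArc d) : Prop :=
  IsSolution H φ ∧
  ¬∃ ψ : HybridArc d, IsSolution H ψ ∧ φ.dom ⊂ ψ.dom ∧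
    ∀ p ∈ φ.dom, φ.toFun p.1 p.2 = ψ.toFun p.1 p.2

/-- The range of a hybrid arc. -/
def HybridArc.rge {d : ℕ} (φ : HybridArc d) : Set (EuclideanSpace ℝ (Fin d)) :=
  {y | ∃ p ∈ φ.dom, y = φ.toFun p.1 p.2}

/-- A hybrid arc is complete if its domain is unbounded (`sup_t dom + sup_j dom = ∞`). -/
def HybridArc.IsComplete {d : ℕ} (φ : HybridArc d) : Prop :=
  ∀ M : ℝ, ∃ p ∈ φ.dom, M < p.1 + (p.2 : ℝ)

/-- A hybrid arc is Zeno if it is complete and `sup_t dom < ∞`. -/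
def HybridArc.IsZeno {d : ℕ} (φ : HybridArc d) : Prop :=
  φ.IsComplete ∧ ∃ τ : ℝ, ∀ p ∈ φ.dom, p.1 ≤ τ

/-- The Zeno time `sup_t dom φ` of a hybrid arc. -/
def HybridArc.zenoTime {d : ℕ} (φ : HybridArc d) : ℝ :=
  sSup (Prod.fst '' φ.dom)

/-- A class-`𝒦∞` function: zero at zero, continuous, strictly increasing and unbounded
(on `[0, ∞)`). -/
def ClassKInf (α : ℝ → ℝ) : Prop :=
  α 0 = 0 ∧ ContinuousOn α (Set.Ici 0) ∧ StrictMonoOn α (Set.Ici 0) ∧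
  ∀ M : ℝ, ∃ s : ℝ, 0 ≤ s ∧ M < α s

/-- Uniform global stability of a closed set `A` for the hybrid system `H`. -/
def UGS {d : ℕ} (H : HybridSystem d) (A : Set (EuclideanSpace ℝ (Fin d))) : Prop :=
  ∃ α : ℝ → ℝ, ClassKInf α ∧ ∀ φ : HybridArc d, IsSolution H φ →
    ∀ p ∈ φ.dom, infDist (φ.toFun p.1 p.2) A ≤ α (infDist (φ.toFun 0 0) A)

/-- Uniform global pre-attractivity of a closed set `A` for the hybrid system `H`. -/
def UGpA {d : ℕ} (H : HybridSystem d) (A : Set (EuclideanSpace ℝ (Fin d))) : Prop :=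
  ∀ ε > (0 : ℝ), ∀ r > (0 : ℝ), ∃ T > (0 : ℝ), ∀ φ : HybridArc d, IsSolution H φ →
    infDist (φ.toFun 0 0) A ≤ r → ∀ p ∈ φ.dom, T ≤ p.1 + (p.2 : ℝ) →
      infDist (φ.toFun p.1 p.2) A ≤ ε

/-- Uniform global pre-asymptotic stability. -/
def UGpAS {d : ℕ} (H : HybridSystem d) (A : Set (EuclideanSpace ℝ (Fin d))) : Prop :=
  UGS H A ∧ UGpA H A

/-- The ω-limit set of a hybrid arc. -/
def hybridOmegaLimit {d : ℕ} (φ : HybridArc d) : Set (EuclideanSpace ℝ (Fin d)) :=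
  {x | ∃ u : ℕ → ℝ × ℕ, (∀ i, u i ∈ φ.dom) ∧
    Tendsto (fun i => (u i).1 + ((u i).2 : ℝ)) atTop atTop ∧
    Tendsto (fun i => φ.toFun (u i).1 (u i).2) atTop (nhds x)}

/-- The restricted system `H ∩ A`: flow set `C ∩ A`, jump set `D ∩ A`, same maps. -/
def HybridSystem.restrict {d : ℕ} (H : HybridSystem d)
    (A : Set (EuclideanSpace ℝ (Fin d))) : HybridSystem d :=
  ⟨H.C ∩ A, H.f, H.D ∩ A, H.g⟩

end
section Aux


/-- The `j`-th time slice of a subset of `ℝ × ℕ`. -/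
def Slice (E : Set (ℝ × ℕ)) (j : ℕ) : Set ℝ := {t | (t, j) ∈ E}

lemma Slice_mono {E E' : Set (ℝ × ℕ)} (h : E ⊆ E') (j : ℕ) : Slice E j ⊆ Slice E' j :=
  fun _ hs => h hs

lemma eq_of_slice_eq {E E' : Set (ℝ × ℕ)} (h : ∀ k, Slice E k = Slice E' k) : E = E' := by
  ext ⟨s, k⟩
  exact Set.ext_iff.1 (h k) s

lemma ordConnected_least_cases {S : Set ℝ} (hc : S.OrdConnected) {τ : ℝ} (h : IsLeast S τ) :
    (∃ b, τ ≤ b ∧ S = Icc τ b) ∨ S = Ici τ ∨ ∃ T, τ ≤ T ∧ S = Ico τ T := by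
  by_cases hb : BddAbove S
  · have hτs : τ ≤ sSup S := le_csSup hb h.1
    by_cases hmem : sSup S ∈ S
    · refine Or.inl ⟨sSup S, hτs, ?_⟩
      apply Subset.antisymm
      · exact fun x hx => ⟨h.2 hx, le_csSup hb hx⟩
      · exact hc.out h.1 hmem
    · refine Or.inr (Or.inr ⟨sSup S, hτs, ?_⟩)
      apply Subset.antisymm
      · intro x hx
        exact ⟨h.2 hx, lt_of_le_of_ne (le_csSup hb hx) (fun he => hmem (he ▸ hx))⟩
      · intro x hx
        obtain ⟨y, hy, hxy⟩ := exists_lt_of_lt_csSup ⟨τ, h.1⟩ hx.2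
        exact hc.out h.1 hy ⟨hx.1, le_of_lt hxy⟩
  · refine Or.inr (Or.inl ?_)
    apply Subset.antisymm
    · exact fun x hx => h.2 hx
    · intro x hx
      obtain ⟨y, hy, hxy⟩ := not_bddAbove_iff.1 hb x
      exact hc.out h.1 hy ⟨hx, le_of_lt hxy⟩

lemma Slice_iUnion (S : ℕ → Set ℝ) (k : ℕ) :
    Slice (⋃ j, S j ×ˢ ({j} : Set ℕ)) k = S k := by
  ext s
  simp only [Slice, mem_setOf_eq, mem_iUnion, mem_prod, mem_singleton_iff]
  constructor
  · rintro ⟨j, hj, rfl⟩; exact hj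
  · intro hs; exact ⟨k, hs, rfl⟩

lemma Slice_fin (S : ℕ → Set ℝ) (J : ℕ) (L : Set ℝ) (k : ℕ) :
    Slice ((⋃ j ∈ Iio J, S j ×ˢ ({j} : Set ℕ)) ∪ L ×ˢ ({J} : Set ℕ)) k
      = if k < J then S k else if k = J then L else ∅ := by
  ext s
  simp only [Slice, mem_setOf_eq, mem_union, mem_iUnion, mem_prod, mem_singleton_iff,
    mem_Iio, exists_prop]
  constructor
  · rintro (⟨j, hj, hs, rfl⟩ | ⟨hs, hk⟩)
    · rw [if_pos hj]; exact hs
    · rw [hk, if_neg (lt_irrefl J), if_pos rfl]; exact hs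
  · intro hs
    split_ifs at hs with h1 h2
    · exact Or.inl ⟨k, h1, hs, rfl⟩
    · exact Or.inr ⟨hs, h2⟩
    · exact absurd hs (notMem_empty s)

/-- Structural properties of the slices of a hybrid time domain. -/
structure SliceProps (E : Set (ℝ × ℕ)) : Prop where
  conn : ∀ j, (Slice E j).OrdConnected
  zero : (Slice E 0).Nonempty → IsLeast (Slice E 0) 0
  least : ∀ j, (Slice E j).Nonempty → ∃ a, IsLeast (Slice E j) a
  step : ∀ j b, IsLeast (Slice E (j + 1)) b → IsGreatest (Slice E j) b


lemma sliceProps_of_form (E : Set (ℝ × ℕ)) (t : ℕ → ℝ) (ht0 : t 0 = 0) (hm : Monotone t)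
    (h : (∀ k, Slice E k = Icc (t k) (t (k + 1))) ∨
      ∃ J L, (L = Icc (t J) (t (J + 1)) ∨ L = Ici (t J) ∨ ∃ T, t J ≤ T ∧ L = Ico (t J) T) ∧
        ∀ k, Slice E k = if k < J then Icc (t k) (t (k + 1)) else if k = J then L else ∅) :
    SliceProps E := by
  have hLconn : ∀ (J : ℕ) (L : Set ℝ),
      (L = Icc (t J) (t (J + 1)) ∨ L = Ici (t J) ∨ ∃ T, t J ≤ T ∧ L = Ico (t J) T) →
      L.OrdConnected := by
    rintro J L (rfl | rfl | ⟨T, _, rfl⟩)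
    · exact ordConnected_Icc
    · exact ordConnected_Ici
    · exact ordConnected_Ico
  have hLleast : ∀ (J : ℕ) (L : Set ℝ),
      (L = Icc (t J) (t (J + 1)) ∨ L = Ici (t J) ∨ ∃ T, t J ≤ T ∧ L = Ico (t J) T) →
      L.Nonempty → IsLeast L (t J) := by
    rintro J L (rfl | rfl | ⟨T, _, rfl⟩) hne
    · exact isLeast_Icc (nonempty_Icc.1 hne)
    · exact isLeast_Ici
    · exact isLeast_Ico (nonempty_Ico.1 hne)
  refine ⟨?_, ?_, ?_, ?_⟩
  · -- conn
    intro j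
    rcases h with h | ⟨J, L, hL, h⟩
    · rw [h]; exact ordConnected_Icc
    · rw [h]
      split_ifs
      · exact ordConnected_Icc
      · exact hLconn J L hL
      · exact ordConnected_empty
  · -- zero
    intro hne
    rcases h with h | ⟨J, L, hL, h⟩
    · rw [h 0, ht0] at hne ⊢
      exact isLeast_Icc (nonempty_Icc.1 hne)
    · rcases Nat.eq_zero_or_pos J with rfl | h0J
      · rw [h 0, if_neg (lt_irrefl 0), if_pos rfl] at hne ⊢
        have := hLleast 0 L hL hne
        rwa [ht0] at this
      · rw [h 0, if_pos h0J, ht0] at hne ⊢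
        exact isLeast_Icc (nonempty_Icc.1 hne)
  · -- least
    intro j hne
    rcases h with h | ⟨J, L, hL, h⟩
    · rw [h j] at hne ⊢
      exact ⟨t j, isLeast_Icc (nonempty_Icc.1 hne)⟩
    · rw [h j] at hne ⊢
      split_ifs at hne ⊢ with h1 h2
      · exact ⟨t j, isLeast_Icc (nonempty_Icc.1 hne)⟩
      · exact ⟨t J, hLleast J L hL hne⟩
      · exact absurd hne Set.not_nonempty_empty
  · -- step
    intro j b hb
    rcases h with h | ⟨J, L, hL, h⟩
    · rw [h (j+1)] at hb
      have hne : (Icc (t (j+1)) (t (j+1+1))).Nonempty := ⟨b, hb.1⟩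
      have hbe : b = t (j+1) := hb.unique (isLeast_Icc (nonempty_Icc.1 hne))
      rw [h j, hbe]
      exact isGreatest_Icc (hm (Nat.le_succ j))
    · rw [h (j+1)] at hb
      rw [h j]
      split_ifs at hb with h1 h2
      · have hjJ : j < J := Nat.lt_of_succ_lt h1
        have hne : (Icc (t (j+1)) (t (j+1+1))).Nonempty := ⟨b, hb.1⟩
        have hbe : b = t (j+1) := hb.unique (isLeast_Icc (nonempty_Icc.1 hne))
        rw [if_pos hjJ, hbe]
        exact isGreatest_Icc (hm (Nat.le_succ j))
      · have hjJ : j < J := h2 ▸ Nat.lt_succ_self j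
        have hbe : b = t J := hb.unique (hLleast J L hL ⟨b, hb.1⟩)
        rw [if_pos hjJ, hbe, ← h2]
        exact isGreatest_Icc (hm (Nat.le_succ j))
      · exact absurd hb.1 (notMem_empty b)

lemma isHTD_of_form (E : Set (ℝ × ℕ)) (t : ℕ → ℝ) (ht0 : t 0 = 0) (hm : Monotone t)
    (h : (∀ k, Slice E k = Icc (t k) (t (k + 1))) ∨
      ∃ J L, (L = Icc (t J) (t (J + 1)) ∨ L = Ici (t J) ∨ ∃ T, t J ≤ T ∧ L = Ico (t J) T) ∧
        ∀ k, Slice E k = if k < J then Icc (t k) (t (k + 1)) else if k = J then L else ∅) :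
    IsHybridTimeDomain E := by
  refine ⟨t, ht0, hm, ?_⟩
  rcases h with h | ⟨J, L, hL, h⟩
  · exact Or.inl (eq_of_slice_eq fun k => by rw [Slice_iUnion, h k])
  · rcases hL with rfl | rfl | ⟨T, hT, rfl⟩
    · exact Or.inr ⟨J, Or.inl (eq_of_slice_eq fun k => by rw [Slice_fin, h k])⟩
    · exact Or.inr ⟨J, Or.inr (Or.inl (eq_of_slice_eq fun k => by rw [Slice_fin, h k]))⟩
    · exact Or.inr ⟨J, Or.inr (Or.inr ⟨T, hT, eq_of_slice_eq fun k => by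
        rw [Slice_fin, h k]⟩)⟩

lemma sliceProps_of_htd {E : Set (ℝ × ℕ)} (hE : IsHybridTimeDomain E) : SliceProps E := by
  obtain ⟨t, ht0, hmono, hshape⟩ := hE
  apply sliceProps_of_form E t ht0 hmono
  rcases hshape with h | ⟨J, h | h | ⟨T, hT, h⟩⟩
  · exact Or.inl fun k => by rw [h, Slice_iUnion]
  · exact Or.inr ⟨J, Icc (t J) (t (J+1)), Or.inl rfl, fun k => by rw [h, Slice_fin]⟩
  · exact Or.inr ⟨J, Ici (t J), Or.inr (Or.inl rfl), fun k => by rw [h, Slice_fin]⟩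
  · exact Or.inr ⟨J, Ico (t J) T, Or.inr (Or.inr ⟨T, hT, rfl⟩), fun k => by rw [h, Slice_fin]⟩

lemma common_least {E E' : Set (ℝ × ℕ)} (hP : SliceProps E) (hP' : SliceProps E')
    (hsub : E ⊆ E') : ∀ {j : ℕ} {a b : ℝ},
      IsLeast (Slice E j) a → IsLeast (Slice E' j) b → a = b := by
  intro j a b ha hb
  cases j with
  | zero =>
    have h1 := hP.zero ⟨a, ha.1⟩
    have h2 := hP'.zero ⟨a, Slice_mono hsub 0 ha.1⟩
    rw [ha.unique h1, hb.unique h2]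
  | succ j =>
    have hga := hP.step j a ha
    have hgb := hP'.step j b hb
    exact le_antisymm (hgb.2 (Slice_mono hsub j hga.1)) (hb.2 (Slice_mono hsub (j+1) ha.1))

variable {d : ℕ}

instance : Preorder (HybridArc d) where
  le χ χ' := χ.dom ⊆ χ'.dom ∧ ∀ p ∈ χ.dom, χ.toFun p.1 p.2 = χ'.toFun p.1 p.2
  le_refl χ := ⟨subset_rfl, fun _ _ => rfl⟩
  le_trans a b c hab hbc :=
    ⟨hab.1.trans hbc.1, fun p hp => (hab.2 p hp).trans (hbc.2 p (hab.1 hp))⟩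

lemma chain_union_sol (H : HybridSystem d) (c : Set (HybridArc d))
    (hc : IsChain (· ≤ ·) c) (hcne : c.Nonempty) (hsol : ∀ χ ∈ c, IsSolution H χ) :
    ∃ Φ : HybridArc d, IsSolution H Φ ∧ ∀ χ ∈ c, χ ≤ Φ := by
  classical
  obtain ⟨χ₀, hχ₀⟩ := hcne
  set Edom : Set (ℝ × ℕ) := ⋃ χ ∈ c, χ.dom with hEdomdef
  have hmemE : ∀ p : ℝ × ℕ, p ∈ Edom ↔ ∃ χ ∈ c, p ∈ χ.dom := by
    intro p; simp [hEdomdef]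
  set F : ℝ → ℕ → EuclideanSpace ℝ (Fin d) := fun s j =>
    if h : ∃ χ ∈ c, ((s, j) : ℝ × ℕ) ∈ χ.dom then h.choose.toFun s j else χ₀.toFun s j
    with hFdef
  have hagree : ∀ χ ∈ c, ∀ χ' ∈ c, ∀ p : ℝ × ℕ, p ∈ χ.dom → p ∈ χ'.dom →
      χ.toFun p.1 p.2 = χ'.toFun p.1 p.2 := by
    intro χ hχ χ' hχ' p hp hp'
    rcases hc.total hχ hχ' with h | h
    · exact h.2 p hp
    · exact (h.2 p hp').symm
  have hFeq : ∀ χ ∈ c, ∀ (s : ℝ) (j : ℕ), ((s, j) : ℝ × ℕ) ∈ χ.dom →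
      F s j = χ.toFun s j := by
    intro χ hχ s j hp
    have hex : ∃ χ' ∈ c, ((s, j) : ℝ × ℕ) ∈ χ'.dom := ⟨χ, hχ, hp⟩
    have h1 : F s j = hex.choose.toFun s j := dif_pos hex
    rw [h1]
    exact hagree _ hex.choose_spec.1 χ hχ (s, j) hex.choose_spec.2 hp
  have hSliceE : ∀ j, Slice Edom j = ⋃ χ ∈ c, Slice χ.dom j := by
    intro j; ext s
    simp only [Slice, mem_setOf_eq, hEdomdef, mem_iUnion, exists_prop]
  have hmemSlice : ∀ {j : ℕ} {s : ℝ}, s ∈ Slice Edom j ↔ ∃ χ ∈ c, s ∈ Slice χ.dom j := by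
    intro j s
    rw [hSliceE]
    simp
  have P : ∀ χ : HybridArc d, SliceProps χ.dom := fun χ => sliceProps_of_htd χ.isHTD
  have hcap : ∀ (j : ℕ) (a b : ℝ), a ∈ Slice Edom j → b ∈ Slice Edom j →
      ∃ χ ∈ c, a ∈ Slice χ.dom j ∧ b ∈ Slice χ.dom j := by
    intro j a b ha hb
    obtain ⟨χ1, h1, ha1⟩ := hmemSlice.1 ha
    obtain ⟨χ2, h2, hb2⟩ := hmemSlice.1 hb
    rcases hc.total h1 h2 with h | h
    · exact ⟨χ2, h2, Slice_mono h.1 j ha1, hb2⟩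
    · exact ⟨χ1, h1, ha1, Slice_mono h.1 j hb2⟩
  have hconnE : ∀ j, (Slice Edom j).OrdConnected := by
    intro j
    rw [ordConnected_iff]
    intro a ha b hb _
    obtain ⟨χ, hχ, ha', hb'⟩ := hcap j a b ha hb
    intro x hx
    exact hmemSlice.2 ⟨χ, hχ, ((P χ).conn j).out ha' hb' hx⟩
  have hleastE : ∀ j, (Slice Edom j).Nonempty → ∃ τ, IsLeast (Slice Edom j) τ ∧
      ∀ χ ∈ c, (Slice χ.dom j).Nonempty → IsLeast (Slice χ.dom j) τ := by
    intro j hne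
    obtain ⟨x, hx⟩ := hne
    obtain ⟨χ1, h1, hx1⟩ := hmemSlice.1 hx
    obtain ⟨τ, hτ⟩ := (P χ1).least j ⟨x, hx1⟩
    have hall : ∀ χ ∈ c, (Slice χ.dom j).Nonempty → IsLeast (Slice χ.dom j) τ := by
      intro χ hχ hneχ
      obtain ⟨τ', hτ'⟩ := (P χ).least j hneχ
      rcases hc.total h1 hχ with h | h
      · rwa [common_least (P χ1) (P χ) h.1 hτ hτ']
      · rwa [← common_least (P χ) (P χ1) h.1 hτ' hτ]
    refine ⟨τ, ⟨hmemSlice.2 ⟨χ1, h1, hτ.1⟩, ?_⟩, hall⟩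
    intro y hy
    obtain ⟨χ2, h2, hy2⟩ := hmemSlice.1 hy
    exact (hall χ2 h2 ⟨y, hy2⟩).2 hy2
  have hstepE : ∀ j, (Slice Edom (j+1)).Nonempty → ∃ b, IsLeast (Slice Edom (j+1)) b ∧
      IsGreatest (Slice Edom j) b := by
    intro j hne1
    obtain ⟨b, hbE, hball⟩ := hleastE (j+1) hne1
    obtain ⟨x, hx⟩ := hne1
    obtain ⟨χ', hχ', hx'⟩ := hmemSlice.1 hx
    have hb' : IsLeast (Slice χ'.dom (j+1)) b := hball χ' hχ' ⟨x, hx'⟩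
    have hg' : IsGreatest (Slice χ'.dom j) b := (P χ').step j b hb'
    refine ⟨b, hbE, hmemSlice.2 ⟨χ', hχ', hg'.1⟩, ?_⟩
    intro y hy
    obtain ⟨χ, hχ, hy'⟩ := hmemSlice.1 hy
    rcases hc.total hχ hχ' with h | h
    · exact hg'.2 (Slice_mono h.1 j hy')
    · have hbχ : IsLeast (Slice χ.dom (j+1)) b :=
        hball χ hχ ⟨x, Slice_mono h.1 (j+1) hx'⟩
      exact ((P χ).step j b hbχ).2 hy'
  have h00 : ((0:ℝ), (0:ℕ)) ∈ Edom := (hmemE _).2 ⟨χ₀, hχ₀, (hsol χ₀ hχ₀).1⟩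
  have h0ne : (Slice Edom 0).Nonempty := ⟨0, h00⟩
  have hzeroE : IsLeast (Slice Edom 0) 0 := by
    obtain ⟨τ, hτ, hall⟩ := hleastE 0 h0ne
    have h0χ : IsLeast (Slice χ₀.dom 0) 0 := (P χ₀).zero ⟨0, (hsol χ₀ hχ₀).1⟩
    have hτ0 : τ = 0 := (hall χ₀ hχ₀ ⟨0, h0χ.1⟩).unique h0χ
    rwa [hτ0] at hτ
  set τf : ℕ → ℝ := fun j => sInf (Slice Edom j) with hτfdef
  have hτf : ∀ j, (Slice Edom j).Nonempty → IsLeast (Slice Edom j) (τf j) := by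
    intro j hnej
    obtain ⟨τ, hτ, _⟩ := hleastE j hnej
    have he : τf j = τ := hτ.csInf_eq
    rwa [he]
  have hτf0 : τf 0 = 0 := hzeroE.csInf_eq
  have hIccStep : ∀ j, (Slice Edom (j+1)).Nonempty →
      Slice Edom j = Icc (τf j) (τf (j+1)) := by
    intro j hne1
    obtain ⟨b, hb, hg⟩ := hstepE j hne1
    have hnej : (Slice Edom j).Nonempty := ⟨b, hg.1⟩
    have hbe : b = τf (j+1) := hb.unique (hτf (j+1) hne1)
    apply Subset.antisymm
    · intro x hx
      exact ⟨(hτf j hnej).2 hx, hbe ▸ hg.2 hx⟩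
    · rw [← hbe]
      exact ordConnected_iff.1 (hconnE j) _ (hτf j hnej).1 _ hg.1 ((hτf j hnej).2 hg.1)
  have hHTD : IsHybridTimeDomain Edom := by
    by_cases hall : ∀ j, (Slice Edom j).Nonempty
    · have hIcc : ∀ j, Slice Edom j = Icc (τf j) (τf (j+1)) := fun j => hIccStep j (hall (j+1))
      have hmono : Monotone τf := monotone_nat_of_le_succ fun j => by
        have hne := hall j
        rw [hIcc j] at hne
        exact nonempty_Icc.1 hne
      exact isHTD_of_form Edom τf hτf0 hmono (Or.inl hIcc)
    · push_neg at hall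
      obtain ⟨j₀, hj₀⟩ := hall
      have hex : ∃ j, ¬(Slice Edom j).Nonempty := ⟨j₀, by rw [hj₀]; exact Set.not_nonempty_empty⟩
      have hJ'spec : ¬(Slice Edom (Nat.find hex)).Nonempty := Nat.find_spec hex
      have hJ'min : ∀ k, k < Nat.find hex → (Slice Edom k).Nonempty := by
        intro k hk
        exact not_not.1 (Nat.find_min hex hk)
      have hJ'pos : 0 < Nat.find hex := by
        rcases Nat.eq_zero_or_pos (Nat.find hex) with h0 | h
        · rw [h0] at hJ'spec
          exact absurd h0ne hJ'spec
        · exact h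
      obtain ⟨J, hJ⟩ : ∃ J, Nat.find hex = J + 1 :=
        ⟨Nat.find hex - 1, (Nat.succ_pred_eq_of_pos hJ'pos).symm⟩
      have hneJ : ∀ k, k ≤ J → (Slice Edom k).Nonempty := fun k hk =>
        hJ'min k (by omega)
      have hempty' : ∀ k, J + 1 ≤ k → ¬(Slice Edom k).Nonempty := by
        intro k hk
        induction k, hk using Nat.le_induction with
        | base => rw [← hJ]; exact hJ'spec
        | succ n hn ih =>
          intro hne
          obtain ⟨b, _, hg⟩ := hstepE n hne
          exact ih ⟨b, hg.1⟩
      have hemptyS : ∀ k, J < k → Slice Edom k = ∅ := fun k hk =>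
        not_nonempty_iff_eq_empty.1 (hempty' k (by omega))
      have hneJJ := hneJ J le_rfl
      have hτJ := hτf J hneJJ
      have hIccLt : ∀ k, k < J → Slice Edom k = Icc (τf k) (τf (k+1)) := fun k hk =>
        hIccStep k (hneJ (k+1) hk)
      have hmonoLt : ∀ k, k + 1 ≤ J → τf k ≤ τf (k+1) := by
        intro k hk
        have h2 := hneJ k (by omega)
        rw [hIccStep k (hneJ (k+1) hk)] at h2
        exact nonempty_Icc.1 h2
      rcases ordConnected_least_cases (hconnE J) hτJ with ⟨b, hτb, hSJ⟩ | hSJ | ⟨T, hτT, hSJ⟩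
      · -- last slice is Icc (τf J) b
        apply isHTD_of_form Edom (fun k => if k ≤ J then τf k else b)
        · simp only [Nat.zero_le, if_pos]
          exact hτf0
        · apply monotone_nat_of_le_succ
          intro k
          beta_reduce
          by_cases hk1 : k + 1 ≤ J
          · rw [if_pos (by omega : k ≤ J), if_pos hk1]
            exact hmonoLt k hk1
          · by_cases hk : k ≤ J
            · rw [if_pos hk, if_neg hk1]
              have hkJ : k = J := by omega
              rw [hkJ]
              exact hτb
            · rw [if_neg hk, if_neg hk1]
        · refine Or.inr ⟨J, Icc (τf J) b, Or.inl ?_, ?_⟩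
          · beta_reduce
            rw [if_pos (le_refl J), if_neg (by omega : ¬ J + 1 ≤ J)]
          · intro k
            rcases lt_trichotomy k J with hk | hk | hk
            · rw [if_pos hk, if_pos (by omega : k ≤ J), if_pos (by omega : k + 1 ≤ J)]
              exact hIccLt k hk
            · rw [if_neg (by omega : ¬ k < J), if_pos hk]
              rw [hk]
              exact hSJ
            · rw [if_neg (by omega : ¬ k < J), if_neg (by omega : ¬ k = J)]
              exact hemptyS k hk
      · -- last slice is Ici (τf J)
        apply isHTD_of_form Edom (fun k => if k ≤ J then τf k else τf J)
        · simp only [Nat.zero_le, if_pos]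
          exact hτf0
        · apply monotone_nat_of_le_succ
          intro k
          beta_reduce
          by_cases hk1 : k + 1 ≤ J
          · rw [if_pos (by omega : k ≤ J), if_pos hk1]
            exact hmonoLt k hk1
          · by_cases hk : k ≤ J
            · rw [if_pos hk, if_neg hk1]
              have hkJ : k = J := by omega
              rw [hkJ]
            · rw [if_neg hk, if_neg hk1]
        · refine Or.inr ⟨J, Ici (τf J), Or.inr (Or.inl ?_), ?_⟩
          · beta_reduce
            rw [if_pos (le_refl J)]
          · intro k
            rcases lt_trichotomy k J with hk | hk | hk
            · rw [if_pos hk, if_pos (by omega : k ≤ J), if_pos (by omega : k + 1 ≤ J)]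
              exact hIccLt k hk
            · rw [if_neg (by omega : ¬ k < J), if_pos hk]
              rw [hk]
              exact hSJ
            · rw [if_neg (by omega : ¬ k < J), if_neg (by omega : ¬ k = J)]
              exact hemptyS k hk
      · -- last slice is Ico (τf J) T
        apply isHTD_of_form Edom (fun k => if k ≤ J then τf k else τf J)
        · simp only [Nat.zero_le, if_pos]
          exact hτf0
        · apply monotone_nat_of_le_succ
          intro k
          beta_reduce
          by_cases hk1 : k + 1 ≤ J
          · rw [if_pos (by omega : k ≤ J), if_pos hk1]
            exact hmonoLt k hk1
          · by_cases hk : k ≤ J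
            · rw [if_pos hk, if_neg hk1]
              have hkJ : k = J := by omega
              rw [hkJ]
            · rw [if_neg hk, if_neg hk1]
        · refine Or.inr ⟨J, Ico (τf J) T, Or.inr (Or.inr ⟨T, ?_, ?_⟩), ?_⟩
          · beta_reduce
            rw [if_pos (le_refl J)]
            exact hτT
          · beta_reduce
            rw [if_pos (le_refl J)]
          · intro k
            rcases lt_trichotomy k J with hk | hk | hk
            · rw [if_pos hk, if_pos (by omega : k ≤ J), if_pos (by omega : k + 1 ≤ J)]
              exact hIccLt k hk
            · rw [if_neg (by omega : ¬ k < J), if_pos hk]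
              rw [hk]
              exact hSJ
            · rw [if_neg (by omega : ¬ k < J), if_neg (by omega : ¬ k = J)]
              exact hemptyS k hk
  have hAC : ∀ j, LocallyAbsolutelyContinuousOn (fun s => F s j) (Slice Edom j) := by
    intro j a b hab hsub
    have ha : a ∈ Slice Edom j := hsub ⟨le_rfl, hab⟩
    have hb : b ∈ Slice Edom j := hsub ⟨hab, le_rfl⟩
    obtain ⟨χ, hχ, ha', hb'⟩ := hcap j a b ha hb
    have hsubχ : Icc a b ⊆ Slice χ.dom j := ordConnected_iff.1 ((P χ).conn j) _ ha' _ hb' hab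
    intro ε hε
    obtain ⟨δ, hδ, hACχ⟩ := χ.locAC j a b hab hsubχ ε hε
    refine ⟨δ, hδ, ?_⟩
    intro m cs ds hcd hdisj hsum
    have hrw : ∀ i, ‖F (ds i) j - F (cs i) j‖
        = ‖χ.toFun (ds i) j - χ.toFun (cs i) j‖ := by
      intro i
      have hci : cs i ∈ Icc a b := ⟨(hcd i).1, (hcd i).2.1.trans (hcd i).2.2⟩
      have hdi : ds i ∈ Icc a b := ⟨(hcd i).1.trans (hcd i).2.1, (hcd i).2.2⟩
      rw [hFeq χ hχ _ j (hsubχ hdi), hFeq χ hχ _ j (hsubχ hci)]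
    calc (∑ i, ‖F (ds i) j - F (cs i) j‖)
        = ∑ i, ‖χ.toFun (ds i) j - χ.toFun (cs i) j‖ :=
          Finset.sum_congr rfl fun i _ => hrw i
      _ < ε := hACχ m cs ds hcd hdisj hsum
  refine ⟨⟨Edom, F, hHTD, hAC⟩, ⟨h00, ?_, ?_, ?_⟩, ?_⟩
  · -- initial value
    show F 0 0 ∈ closure H.C ∪ H.D
    rw [hFeq χ₀ hχ₀ 0 0 (hsol χ₀ hχ₀).1]
    exact (hsol χ₀ hχ₀).2.1
  · -- flow condition
    intro j hint
    constructor
    · intro s hs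
      have hs' : s ∈ interior (Slice Edom j) := hs
      obtain ⟨ε, hε, hball⟩ := Metric.mem_nhds_iff.1 (mem_interior_iff_mem_nhds.1 hs')
      have hmem : ∀ x : ℝ, |x - s| < ε → x ∈ Slice Edom j := fun x hx =>
        hball (show x ∈ Metric.ball s ε by simpa [Real.dist_eq] using hx)
      have haS : s - ε/2 ∈ Slice Edom j := hmem _ (by
        rw [show s - ε/2 - s = -(ε/2) by ring, abs_neg, abs_of_pos (by linarith)]
        linarith)
      have hbS : s + ε/2 ∈ Slice Edom j := hmem _ (by
        rw [show s + ε/2 - s = ε/2 by ring, abs_of_pos (by linarith)]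
        linarith)
      obtain ⟨χ, hχ, ha', hb'⟩ := hcap j (s - ε/2) (s + ε/2) haS hbS
      have hIoo : Ioo (s - ε/2) (s + ε/2) ⊆ Slice χ.dom j := fun x hx =>
        ordConnected_iff.1 ((P χ).conn j) _ ha' _ hb' (by linarith)
          ⟨le_of_lt hx.1, le_of_lt hx.2⟩
      have hsχ : s ∈ interior (Slice χ.dom j) :=
        mem_interior.2 ⟨Ioo _ _, hIoo, isOpen_Ioo, ⟨by linarith, by linarith⟩⟩
      have hflow := ((hsol χ hχ).2.2.1 j ⟨s, hsχ⟩).1 s hsχ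
      show F s j ∈ H.C
      rw [hFeq χ hχ s j (show s ∈ Slice χ.dom j from interior_subset hsχ)]
      exact hflow
    · -- a.e. derivative
      have hSmeas : MeasurableSet (Slice Edom j) := (hconnE j).measurableSet
      show ∀ᵐ t ∂(volume.restrict (Slice Edom j)),
        HasDerivAt (fun s => F s j) (H.f (F t j)) t
      rw [ae_iff, Measure.restrict_apply' hSmeas]
      have hBad : ∀ χ ∈ c, volume ({t | ¬ HasDerivAt (fun s => χ.toFun s j)
          (H.f (χ.toFun t j)) t} ∩ Slice χ.dom j) = 0 := by
        intro χ hχ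
        by_cases hint' : (interior (Slice χ.dom j)).Nonempty
        · have hae := ((hsol χ hχ).2.2.1 j hint').2
          rw [ae_iff] at hae
          have hae2 : (volume.restrict (Slice χ.dom j)) {a | ¬HasDerivAt
              (fun s => χ.toFun s j) (H.f (χ.toFun a j)) a} = 0 := hae
          rwa [Measure.restrict_apply' ((P χ).conn j).measurableSet] at hae2
        · apply measure_mono_null inter_subset_right
          apply Set.Subsingleton.measure_zero _ volume
          intro x hx y hy
          by_contra hxy
          have hsub2 : ∀ u v : ℝ, u ∈ Slice χ.dom j → v ∈ Slice χ.dom j → u < v → False := by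
            intro u v hu hv huv
            have hIoo : Ioo u v ⊆ Slice χ.dom j := fun z hz =>
              ordConnected_iff.1 ((P χ).conn j) _ hu _ hv (le_of_lt huv)
                ⟨le_of_lt hz.1, le_of_lt hz.2⟩
            exact hint' ⟨(u+v)/2, mem_interior.2 ⟨Ioo u v, hIoo, isOpen_Ioo,
              ⟨by linarith, by linarith⟩⟩⟩
          rcases lt_or_gt_of_ne hxy with hlt | hlt
          · exact hsub2 x y hx hy hlt
          · exact hsub2 y x hy hx hlt
      have hSne : (Slice Edom j).Nonempty := hint.mono interior_subset
      obtain ⟨τc, hτcE, hτcall⟩ := hleastE j hSne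
      have hτS : IsLeast (Slice Edom j) (τf j) := hτf j hSne
      have hτceq : τc = τf j := hτcE.unique hτS
      have harc : ∀ q : ℚ, ∃ χ, χ ∈ c ∧ ((q:ℝ) ∈ Slice Edom j → (q:ℝ) ∈ Slice χ.dom j) := by
        intro q
        by_cases hq : (q:ℝ) ∈ Slice Edom j
        · obtain ⟨χ, hχ, hq'⟩ := hmemSlice.1 hq
          exact ⟨χ, hχ, fun _ => hq'⟩
        · exact ⟨χ₀, hχ₀, fun h => absurd h hq⟩
      choose arcq harcqc harcqm using harc
      have hNnull : volume (({τf j, sSup (Slice Edom j)} : Set ℝ) ∪ ⋃ q : ℚ,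
          ({t | ¬ HasDerivAt (fun s => (arcq q).toFun s j)
            (H.f ((arcq q).toFun t j)) t} ∩ Slice (arcq q).dom j)) = 0 := by
        apply measure_union_null
        · exact (Set.Finite.insert _ (finite_singleton _)).measure_zero volume
        · exact measure_iUnion_null fun q => hBad (arcq q) (harcqc q)
      apply measure_mono_null ?_ hNnull
      rintro x ⟨hxbad, hxS⟩
      by_contra hxN
      simp only [mem_union, mem_insert_iff, mem_singleton_iff, mem_iUnion, not_or,
        not_exists] at hxN
      obtain ⟨⟨hxτ, hxsup⟩, hxB⟩ := hxN
      have hτx : τf j < x := lt_of_le_of_ne (hτS.2 hxS) (fun h => hxτ h.symm)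
      have hy : ∃ y ∈ Slice Edom j, x < y := by
        by_cases hbdd : BddAbove (Slice Edom j)
        · exact exists_lt_of_lt_csSup hSne (lt_of_le_of_ne (le_csSup hbdd hxS) hxsup)
        · obtain ⟨y, hy, hxy⟩ := not_bddAbove_iff.1 hbdd x
          exact ⟨y, hy, hxy⟩
      obtain ⟨y, hyS, hxy⟩ := hy
      obtain ⟨q, hq1, hq2⟩ := exists_rat_btwn hxy
      have hqS : (q:ℝ) ∈ Slice Edom j := ordConnected_iff.1 (hconnE j) _ hxS _ hyS
        (le_of_lt hxy) ⟨le_of_lt hq1, le_of_lt hq2⟩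
      have hqχ : (q:ℝ) ∈ Slice (arcq q).dom j := harcqm q hqS
      have hτχ : IsLeast (Slice (arcq q).dom j) (τf j) := by
        have h := hτcall (arcq q) (harcqc q) ⟨q, hqχ⟩
        rwa [hτceq] at h
      have hIoo : Ioo (τf j) (q:ℝ) ⊆ Slice (arcq q).dom j := fun z hz =>
        ordConnected_iff.1 ((P (arcq q)).conn j) _ hτχ.1 _ hqχ (le_of_lt (hτx.trans hq1))
          ⟨le_of_lt hz.1, le_of_lt hz.2⟩
      have hxint : x ∈ Slice (arcq q).dom j := hIoo ⟨hτx, hq1⟩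
      have hder : HasDerivAt (fun s => (arcq q).toFun s j)
          (H.f ((arcq q).toFun x j)) x := by
        by_contra hnd
        exact hxB q ⟨hnd, hxint⟩
      refine hxbad ?_
      have hEv : (fun s => F s j) =ᶠ[nhds x] (fun s => (arcq q).toFun s j) := by
        filter_upwards [Ioo_mem_nhds hτx hq1] with z hz
        exact hFeq (arcq q) (harcqc q) z j (hIoo hz)
      show HasDerivAt (fun s => F s j) (H.f (F x j)) x
      rw [hFeq (arcq q) (harcqc q) x j hxint]
      exact hder.congr_of_eventuallyEq hEv
  · -- jump condition
    intro s j h1 h2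
    obtain ⟨χ1, hχ1, hd1⟩ := (hmemE _).1 h1
    obtain ⟨χ2, hχ2, hd2⟩ := (hmemE _).1 h2
    obtain ⟨χ, hχ, hd1', hd2'⟩ : ∃ χ ∈ c, ((s,j) : ℝ×ℕ) ∈ χ.dom ∧
        ((s,j+1) : ℝ×ℕ) ∈ χ.dom := by
      rcases hc.total hχ1 hχ2 with h | h
      · exact ⟨χ2, hχ2, h.1 hd1, hd2⟩
      · exact ⟨χ1, hχ1, hd1, h.1 hd2⟩
    have hjump := (hsol χ hχ).2.2.2 s j hd1' hd2'
    show F s j ∈ H.D ∧ F s (j+1) = H.g (F s j)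
    rw [hFeq χ hχ s j hd1', hFeq χ hχ s (j+1) hd2']
    exact hjump
  · -- upper bound
    intro χ hχ
    refine ⟨fun p hp => (hmemE p).2 ⟨χ, hχ, hp⟩, fun p hp => ?_⟩
    show χ.toFun p.1 p.2 = F p.1 p.2
    exact (hFeq χ hχ p.1 p.2 hp).symm

lemma exists_maximal_extension (H : HybridSystem d) (ψ : HybridArc d)
    (hψ : IsSolution H ψ) : ∃ m : HybridArc d, IsMaximalSolution H m ∧ ψ ≤ m := by
  obtain ⟨m, hψm, hms, hmax⟩ := zorn_le_nonempty₀ {χ : HybridArc d | IsSolution H χ}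
    (fun c hcs hchain y hy => by
      obtain ⟨Φ, hΦ, hub⟩ := chain_union_sol H c hchain ⟨y, hy⟩ (fun χ hχ => hcs hχ)
      exact ⟨Φ, hΦ, hub⟩) ψ hψ
  refine ⟨m, ⟨hms, ?_⟩, hψm⟩
  rintro ⟨χ, hχsol, hss, hag⟩
  have hle : m ≤ χ := ⟨hss.subset, hag⟩
  exact hss.not_subset (hmax hχsol hle).1

lemma sol_of_restrict {H : HybridSystem d} {A : Set (EuclideanSpace ℝ (Fin d))}
    {χ : HybridArc d} (h : IsSolution (H.restrict A) χ) : IsSolution H χ := by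
  obtain ⟨h1, h2, h3, h4⟩ := h
  refine ⟨h1, ?_, ?_, ?_⟩
  · rcases h2 with h2 | h2
    · exact Or.inl (closure_mono inter_subset_left h2)
    · exact Or.inr h2.1
  · intro j hj
    exact ⟨fun t ht => ((h3 j hj).1 t ht).1, (h3 j hj).2⟩
  · intro s j hj hj'
    exact ⟨(h4 s j hj hj').1.1, (h4 s j hj hj').2⟩

lemma sol_to_restrict {H : HybridSystem d} {A : Set (EuclideanSpace ℝ (Fin d))}
    {χ : HybridArc d} (hA : A ⊆ H.C ∪ H.D) (h : IsSolution H χ)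
    (h0 : χ.toFun 0 0 ∈ A) (hr : χ.rge ⊆ A) : IsSolution (H.restrict A) χ := by
  obtain ⟨h1, h2, h3, h4⟩ := h
  refine ⟨h1, ?_, ?_, ?_⟩
  · rcases hA h0 with hc | hd
    · exact Or.inl (subset_closure ⟨hc, h0⟩)
    · exact Or.inr ⟨hd, h0⟩
  · intro j hj
    constructor
    · intro t ht
      have ht' : t ∈ {t | (t, j) ∈ χ.dom} := interior_subset ht
      exact ⟨(h3 j hj).1 t ht, hr ⟨(t, j), ht', rfl⟩⟩
    · exact (h3 j hj).2
  · intro s j hj hj'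
    exact ⟨⟨(h4 s j hj hj').1, hr ⟨(s, j), hj, rfl⟩⟩, (h4 s j hj hj').2⟩

end Aux

/-- **Solutions of `H` starting in a strongly forward pre-invariant set `A ⊆ C ∪ D` coincide
with solutions of the restricted system `H ∩ A`**: if every maximal solution of `H` starting
in `A` has range contained in `A`, then a hybrid arc starting in `A` is a maximal solution of
`H` if and only if it is a maximal solution of `H ∩ A`. -/
theorem maximalSolution_restrict_iff {d : ℕ} (H : HybridSystem d)
    (A : Set (EuclideanSpace ℝ (Fin d))) (hA : A ⊆ H.C ∪ H.D)
    (hSFpI : ∀ φ : HybridArc d, IsMaximalSolution H φ → φ.toFun 0 0 ∈ A → φ.rge ⊆ A) :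
    ∀ φ : HybridArc d, φ.toFun 0 0 ∈ A →
      (IsMaximalSolution H φ ↔ IsMaximalSolution (H.restrict A) φ) := by
  intro φ hφA
  constructor
  · rintro ⟨hsolφ, hmax⟩
    have hrge := hSFpI φ ⟨hsolφ, hmax⟩ hφA
    refine ⟨sol_to_restrict hA hsolφ hφA hrge, ?_⟩
    rintro ⟨ψ, hψ, hss, hag⟩
    exact hmax ⟨ψ, sol_of_restrict hψ, hss, hag⟩
  · rintro ⟨hsolφ, hmax⟩
    have hsolφH : IsSolution H φ := sol_of_restrict hsolφ
    refine ⟨hsolφH, ?_⟩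
    rintro ⟨ψ, hψ, hss, hag⟩
    obtain ⟨m, hmmax, hψm⟩ := exists_maximal_extension H ψ hψ
    have h00φ : ((0:ℝ), (0:ℕ)) ∈ φ.dom := hsolφH.1
    have h00ψ : ((0:ℝ), (0:ℕ)) ∈ ψ.dom := hψ.1
    have he1 : φ.toFun 0 0 = ψ.toFun 0 0 := hag (0, 0) h00φ
    have he2 : ψ.toFun 0 0 = m.toFun 0 0 := hψm.2 (0, 0) h00ψ
    have hm00 : m.toFun 0 0 ∈ A := by rw [← he2, ← he1]; exact hφA
    have hrgem := hSFpI m hmmax hm00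
    have hrgeψ : ψ.rge ⊆ A := by
      rintro y ⟨p, hp, rfl⟩
      rw [hψm.2 p hp]
      exact hrgem ⟨p, hψm.1 hp, rfl⟩
    have hψ00A : ψ.toFun 0 0 ∈ A := by rw [← he1]; exact hφA
    exact hmax ⟨ψ, sol_to_restrict hA hψ hψ00A hrgeψ, hss, hag⟩
end

section
/- Let λ ∈ (0,1), θ = (1−λ²)/(π(1+λ²)), γ > 0, and define V(x₁, x₂) = (1 + θ·arctan x₂)(x₂²/2 + γx₁). Then there exist functions α₁, α₂ : ℝ≥0 → ℝ≥0 that are zero at zero, continuous, strictly increasing and unbounded (class K∞) such that α₁(√(x₁² + x₂²)) ≤ V(x₁, x₂) ≤ α₂(√(x₁² + x₂²)) for all x₁ ≥ 0 and x₂ ∈ ℝ. -/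
lemma classKInf_low (c : ℝ) (hc : 0 < c) :
    ClassKInf (fun r => (c / 2) * (r ^ 2 / (1 + r))) := by
  refine ⟨by norm_num, ?_, ?_, ?_⟩
  · apply ContinuousOn.mul continuousOn_const
    apply ContinuousOn.div (by fun_prop) (by fun_prop)
    intro r hr
    simp only [Set.mem_Ici] at hr
    positivity
  · intro a ha b hb hab
    simp only [Set.mem_Ici] at ha hb
    have h1 : (0:ℝ) < 1 + a := by linarith
    have h2 : (0:ℝ) < 1 + b := by linarith
    have : a ^ 2 / (1 + a) < b ^ 2 / (1 + b) := by
      rw [div_lt_div_iff₀ h1 h2]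
      have hkey := mul_pos (sub_pos.2 hab) (show 0 < a + b + a * b by nlinarith)
      nlinarith
    have hc2 : (0:ℝ) < c / 2 := by linarith
    exact mul_lt_mul_of_pos_left this hc2
  · intro M
    refine ⟨max 1 (2 * (M + 1) / c + 1), le_trans zero_le_one (le_max_left _ _), ?_⟩
    set s := max 1 (2 * (M + 1) / c + 1) with hs
    have hs1 : (1:ℝ) ≤ s := le_max_left _ _
    have hs2 : 2 * (M + 1) / c + 1 ≤ s := le_max_right _ _
    have hsp : (0:ℝ) < 1 + s := by linarith
    have key : s - 1 ≤ s ^ 2 / (1 + s) := by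
      rw [le_div_iff₀ hsp]; nlinarith
    have h3 : 2 * (M + 1) / c ≤ s - 1 := by linarith
    have h4 : 2 * (M + 1) ≤ c * (s - 1) := by
      rw [div_le_iff₀ hc] at h3; linarith
    have : M < (c / 2) * (s - 1) := by nlinarith
    calc M < (c / 2) * (s - 1) := this
      _ ≤ (c / 2) * (s ^ 2 / (1 + s)) := by
          apply mul_le_mul_of_nonneg_left key (by linarith)

lemma classKInf_high (γ : ℝ) (hγ : 0 < γ) :
    ClassKInf (fun r => (3 / 2) * (r ^ 2 / 2 + γ * r)) := by
  refine ⟨by norm_num, by fun_prop, ?_, ?_⟩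
  · intro a ha b hb hab
    simp only [Set.mem_Ici] at ha hb
    nlinarith
  · intro M
    refine ⟨max 0 (M / γ + 1), le_max_left _ _, ?_⟩
    set s := max 0 (M / γ + 1) with hs
    have hs0 : (0:ℝ) ≤ s := le_max_left _ _
    have hs2 : M / γ + 1 ≤ s := le_max_right _ _
    have : M / γ < s := by linarith
    have hMγ : M < γ * s := by
      rw [div_lt_iff₀ hγ] at this; linarith
    nlinarith

/-- The bouncing-ball Lyapunov function `V(x₁, x₂) = (1 + θ·arctan x₂)(x₂²/2 + γx₁)` with
`λ ∈ (0,1)`, `θ = (1-λ²)/(π(1+λ²))` and `γ > 0` is sandwiched between two class-`𝒦∞`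
functions of the Euclidean norm `√(x₁² + x₂²)` on the half-plane `x₁ ≥ 0`. -/
theorem bouncing_ball_V_classKInf_bounds (lam θ γ : ℝ)
    (hlam : lam ∈ Set.Ioo (0 : ℝ) 1)
    (hθ : θ = (1 - lam ^ 2) / (Real.pi * (1 + lam ^ 2))) (hγ : 0 < γ) :
    ∃ α₁ α₂ : ℝ → ℝ, ClassKInf α₁ ∧ ClassKInf α₂ ∧
      ∀ x₁ x₂ : ℝ, 0 ≤ x₁ →
        α₁ (Real.sqrt (x₁ ^ 2 + x₂ ^ 2)) ≤
            (1 + θ * Real.arctan x₂) * (x₂ ^ 2 / 2 + γ * x₁) ∧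
          (1 + θ * Real.arctan x₂) * (x₂ ^ 2 / 2 + γ * x₁) ≤
            α₂ (Real.sqrt (x₁ ^ 2 + x₂ ^ 2)) := by
  obtain ⟨hl0, hl1⟩ := hlam
  have hπ : (0:ℝ) < Real.pi := Real.pi_pos
  have hlam2 : lam ^ 2 < 1 := by nlinarith
  have hθpos : 0 < θ := by
    rw [hθ]; apply div_pos (by linarith) (by positivity)
  have hθπ : θ * Real.pi < 1 := by
    rw [hθ, div_mul_eq_mul_div, div_lt_one (by positivity)]
    nlinarith [mul_pos hπ (mul_pos hl0 hl0)]
  set c : ℝ := min (1 / 2) γ with hcdef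
  have hc : 0 < c := lt_min (by norm_num) hγ
  have hc1 : c ≤ 1 / 2 := min_le_left _ _
  have hc2 : c ≤ γ := min_le_right _ _
  refine ⟨fun r => (c / 2) * (r ^ 2 / (1 + r)), fun r => (3 / 2) * (r ^ 2 / 2 + γ * r),
    classKInf_low c hc, classKInf_high γ hγ, ?_⟩
  intro x₁ x₂ hx₁
  set r := Real.sqrt (x₁ ^ 2 + x₂ ^ 2) with hrdef
  have hr0 : 0 ≤ r := Real.sqrt_nonneg _
  have hr2 : r ^ 2 = x₁ ^ 2 + x₂ ^ 2 := Real.sq_sqrt (by positivity)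
  have hx1r : x₁ ≤ r := by
    nlinarith [sq_nonneg (r - x₁)]
  have hat1 := Real.arctan_lt_pi_div_two x₂
  have hat2 := Real.neg_pi_div_two_lt_arctan x₂
  have hA1 : (1:ℝ) / 2 ≤ 1 + θ * Real.arctan x₂ := by nlinarith
  have hA2 : 1 + θ * Real.arctan x₂ ≤ 3 / 2 := by nlinarith
  have hB0 : 0 ≤ x₂ ^ 2 / 2 + γ * x₁ := by positivity
  constructor
  · have hkey : r ^ 2 / (1 + r) ≤ x₂ ^ 2 + x₁ := by
      rw [div_le_iff₀ (by linarith)]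
      nlinarith
    have h1 : (c / 2) * (r ^ 2 / (1 + r)) ≤ (c / 2) * (x₂ ^ 2 + x₁) :=
      mul_le_mul_of_nonneg_left hkey (by linarith)
    have h2 : (c / 2) * (x₂ ^ 2 + x₁) ≤ (1 / 2) * (x₂ ^ 2 / 2 + γ * x₁) := by
      nlinarith [mul_le_mul_of_nonneg_right hc1 (sq_nonneg x₂),
        mul_le_mul_of_nonneg_right hc2 hx₁]
    have h3 : (1 / 2) * (x₂ ^ 2 / 2 + γ * x₁) ≤
        (1 + θ * Real.arctan x₂) * (x₂ ^ 2 / 2 + γ * x₁) :=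
      mul_le_mul_of_nonneg_right hA1 hB0
    linarith
  · have h1 : (1 + θ * Real.arctan x₂) * (x₂ ^ 2 / 2 + γ * x₁) ≤
        (3 / 2) * (x₂ ^ 2 / 2 + γ * x₁) := mul_le_mul_of_nonneg_right hA2 hB0
    have hx2 : x₂ ^ 2 ≤ r ^ 2 := by nlinarith [sq_nonneg x₁]
    linarith [mul_le_mul_of_nonneg_left hx1r hγ.le]
end

section
/- Let λ ∈ (0,1), θ = (1−λ²)/(π(1+λ²)), γ > 0, and define V(x₁, x₂) = (1 + θ·arctan x₂)(x₂²/2 + γx₁). Then there exists a continuous positive definite function ρ : ℝ≥0 → ℝ≥0 (i.e., ρ(0) = 0 and ρ(s) > 0 for all s > 0) such that for all x₁ ≥ 0 and x₂ ∈ ℝ: x₂·(∂V/∂x₁)(x₁, x₂) − γ·(∂V/∂x₂)(x₁, x₂) ≤ −ρ(√(x₁² + x₂²)). -/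
/-!
Along the flow the energy `E = x₂²/2 + γ x₁` is conserved, so the Lie derivative of
`V = (1 + θ arctan x₂) E` only sees the `arctan` factor, which decreases at rate
`θ / (1 + x₂²)` because `ẋ₂ = -γ`. This gives `V̇ = -γ θ E / (1 + x₂²)`. With `r = |x|` and
`c = min γ (1/2)` one has `c r² ≤ E (1 + r)` on `x₁ ≥ 0`, while `1 + x₂² ≤ 1 + r²`, so
`V̇ ≤ -γ θ c r² / ((1 + r)(1 + r²))`.
-/

open Real

noncomputable section

namespace BouncingBall

def energy (γ x₁ x₂ : ℝ) : ℝ := x₂ ^ 2 / 2 + γ * x₁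

def decayRate (s : ℝ) : ℝ := s ^ 2 / ((1 + s) * (1 + s ^ 2))

theorem decayRate_zero : decayRate 0 = 0 := by simp [decayRate]

theorem decayRate_pos {s : ℝ} (hs : 0 < s) : 0 < decayRate s := by
  unfold decayRate
  positivity

theorem continuousOn_decayRate : ContinuousOn decayRate (Set.Ici 0) := by
  refine ContinuousOn.div (by fun_prop) (by fun_prop) fun s (hs : 0 ≤ s) => ?_
  positivity

theorem lieDerivative_eq (θ γ x₁ x₂ : ℝ) :
    x₂ * deriv (fun a : ℝ => (1 + θ * arctan x₂) * (x₂ ^ 2 / 2 + γ * a)) x₁ -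
        γ * deriv (fun b : ℝ => (1 + θ * arctan b) * (b ^ 2 / 2 + γ * x₁)) x₂ =
      -(γ * θ * (energy γ x₁ x₂ / (1 + x₂ ^ 2))) := by
  have h₁ : HasDerivAt (fun a : ℝ => (1 + θ * arctan x₂) * (x₂ ^ 2 / 2 + γ * a))
      ((1 + θ * arctan x₂) * γ) x₁ := by
    simpa using (((hasDerivAt_id x₁).const_mul γ).const_add (x₂ ^ 2 / 2)).const_mul
      (1 + θ * arctan x₂)
  have h₂ : HasDerivAt (fun b : ℝ => (1 + θ * arctan b) * (b ^ 2 / 2 + γ * x₁))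
      (θ * (1 / (1 + x₂ ^ 2)) * (x₂ ^ 2 / 2 + γ * x₁) + (1 + θ * arctan x₂) * x₂) x₂ := by
    refine (((hasDerivAt_arctan x₂).const_mul θ).const_add 1).mul ?_
    simpa using ((hasDerivAt_pow 2 x₂).div_const 2).add_const (γ * x₁)
  rw [h₁.deriv, h₂.deriv, energy]
  field_simp
  ring

variable {γ x₁ : ℝ} (x₂ : ℝ) (hγ : 0 < γ) (hx₁ : 0 ≤ x₁)
include hγ hx₁

theorem energy_nonneg : 0 ≤ energy γ x₁ x₂ := by
  unfold energy
  positivity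

theorem min_mul_sq_norm_le_energy_mul :
    min γ (1 / 2) * (x₁ ^ 2 + x₂ ^ 2) ≤ energy γ x₁ x₂ * (1 + √(x₁ ^ 2 + x₂ ^ 2)) := by
  set r := √(x₁ ^ 2 + x₂ ^ 2)
  have hr : 0 ≤ r := sqrt_nonneg _
  have hx₁r : x₁ ≤ r := le_sqrt_of_sq_le (by nlinarith)
  have h₁ : min γ (1 / 2) * x₁ * x₁ ≤ γ * x₁ * r :=
    mul_le_mul (mul_le_mul_of_nonneg_right (min_le_left _ _) hx₁) hx₁r hx₁ (by positivity)
  have h₂ : min γ (1 / 2) * x₂ ^ 2 ≤ x₂ ^ 2 / 2 := by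
    nlinarith [mul_le_mul_of_nonneg_right (min_le_right γ (1 / 2)) (sq_nonneg x₂)]
  unfold energy
  nlinarith [mul_nonneg (sq_nonneg x₂) hr]

theorem min_mul_decayRate_le_energy_div :
    min γ (1 / 2) * decayRate √(x₁ ^ 2 + x₂ ^ 2) ≤ energy γ x₁ x₂ / (1 + x₂ ^ 2) := by
  have hr2 : √(x₁ ^ 2 + x₂ ^ 2) ^ 2 = x₁ ^ 2 + x₂ ^ 2 := sq_sqrt (by positivity)
  have hE := energy_nonneg x₂ hγ hx₁
  rw [decayRate, hr2, ← mul_div_assoc, ← div_div]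
  calc min γ (1 / 2) * (x₁ ^ 2 + x₂ ^ 2) / (1 + √(x₁ ^ 2 + x₂ ^ 2)) / (1 + (x₁ ^ 2 + x₂ ^ 2))
      ≤ energy γ x₁ x₂ / (1 + (x₁ ^ 2 + x₂ ^ 2)) := by
        gcongr
        rw [div_le_iff₀ (by positivity)]
        exact min_mul_sq_norm_le_energy_mul x₂ hγ hx₁
    _ ≤ energy γ x₁ x₂ / (1 + x₂ ^ 2) := by
        gcongr
        exact le_add_of_nonneg_left (sq_nonneg x₁)

end BouncingBall

end

open BouncingBall

/-- There is a continuous positive definite function `ρ` such that the derivative of the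
bouncing-ball Lyapunov function `V(x₁, x₂) = (1 + θ·arctan x₂)(x₂²/2 + γx₁)` along the flow
vector field `f(x₁, x₂) = (x₂, -γ)` satisfies
`x₂·∂V/∂x₁ - γ·∂V/∂x₂ ≤ -ρ(√(x₁² + x₂²))` on the half-plane `x₁ ≥ 0`. -/
theorem bouncing_ball_V_flow_decrease (lam θ γ : ℝ)
    (hlam : lam ∈ Set.Ioo (0 : ℝ) 1)
    (hθ : θ = (1 - lam ^ 2) / (Real.pi * (1 + lam ^ 2))) (hγ : 0 < γ) :
    ∃ ρ : ℝ → ℝ, ContinuousOn ρ (Set.Ici 0) ∧ ρ 0 = 0 ∧ (∀ s : ℝ, 0 < s → 0 < ρ s) ∧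
      ∀ x₁ x₂ : ℝ, 0 ≤ x₁ →
        x₂ * deriv (fun a : ℝ => (1 + θ * Real.arctan x₂) * (x₂ ^ 2 / 2 + γ * a)) x₁ -
            γ * deriv (fun b : ℝ => (1 + θ * Real.arctan b) * (b ^ 2 / 2 + γ * x₁)) x₂ ≤
          -ρ (Real.sqrt (x₁ ^ 2 + x₂ ^ 2)) := by
  have hθ_pos : 0 < θ := by
    have : lam ^ 2 < 1 := by nlinarith [hlam.1, hlam.2]
    rw [hθ]
    exact div_pos (by linarith) (by positivity)
  refine ⟨fun s => γ * θ * (min γ (1 / 2) * decayRate s),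
    continuousOn_const.mul (continuousOn_const.mul continuousOn_decayRate),
    by simp [decayRate_zero], fun s hs => by have := decayRate_pos hs; positivity, ?_⟩
  intro x₁ x₂ hx₁
  rw [lieDerivative_eq, neg_le_neg_iff]
  exact mul_le_mul_of_nonneg_left (min_mul_decayRate_le_energy_div x₂ hγ hx₁) (by positivity)
end

section
/- Let λ ∈ (0,1) and θ = (1−λ²)/(π(1+λ²)). Then for every s > 0: (1 + θ·arctan(λs))·(λ²s²/2) − (1 − θ·arctan s)·(s²/2) ≤ −((1−λ²)/4)·s². Equivalently, for any γ > 0 and V(x₁, x₂) = (1 + θ·arctan x₂)(x₂²/2 + γx₁), the value of V decreases across the bouncing-ball jump map g(0, x₂) = (0, −λx₂): for all x₂ < 0, V(0, −λx₂) − V(0, x₂) ≤ −((1−λ²)/4)·x₂². -/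
/-- **Decrease of the bouncing-ball Lyapunov function across jumps**: for `λ ∈ (0,1)` and
`θ = (1-λ²)/(π(1+λ²))`, one has
`(1 + θ·arctan(λs))·(λ²s²/2) - (1 - θ·arctan s)·(s²/2) ≤ -((1-λ²)/4)·s²` for all `s > 0`;
equivalently, for any `γ > 0` and `V(x₁, x₂) = (1 + θ·arctan x₂)(x₂²/2 + γx₁)`, the jump map
`g(0, x₂) = (0, -λx₂)` satisfies `V(0, -λx₂) - V(0, x₂) ≤ -((1-λ²)/4)·x₂²` for all
`x₂ < 0`. -/
theorem bouncing_ball_V_jump_decrease (lam θ : ℝ) (hlam : lam ∈ Set.Ioo (0 : ℝ) 1)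
    (hθ : θ = (1 - lam ^ 2) / (Real.pi * (1 + lam ^ 2))) :
    (∀ s : ℝ, 0 < s →
      (1 + θ * Real.arctan (lam * s)) * (lam ^ 2 * s ^ 2 / 2) -
          (1 - θ * Real.arctan s) * (s ^ 2 / 2) ≤
        -((1 - lam ^ 2) / 4) * s ^ 2) ∧
    ∀ γ : ℝ, 0 < γ → ∀ x₂ : ℝ, x₂ < 0 →
      (1 + θ * Real.arctan (-(lam * x₂))) * ((-(lam * x₂)) ^ 2 / 2 + γ * 0) -
          (1 + θ * Real.arctan x₂) * (x₂ ^ 2 / 2 + γ * 0) ≤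
        -((1 - lam ^ 2) / 4) * x₂ ^ 2 := by
  obtain ⟨h0, h1⟩ := hlam
  have hpi : 0 < Real.pi := Real.pi_pos
  have hden : Real.pi * (1 + lam ^ 2) ≠ 0 := by positivity
  have hθmul : θ * (Real.pi * (1 + lam ^ 2)) = 1 - lam ^ 2 := by
    rw [hθ]; field_simp
  have hθ0 : 0 ≤ θ := by
    rw [hθ]; apply div_nonneg <;> nlinarith
  have key : ∀ s : ℝ, 0 < s →
      (1 + θ * Real.arctan (lam * s)) * (lam ^ 2 * s ^ 2 / 2) -
          (1 - θ * Real.arctan s) * (s ^ 2 / 2) ≤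
        -((1 - lam ^ 2) / 4) * s ^ 2 := by
    intro s hs
    have ha1 : Real.arctan (lam * s) ≤ Real.pi / 2 := (Real.arctan_lt_pi_div_two _).le
    have ha2 : Real.arctan s ≤ Real.pi / 2 := (Real.arctan_lt_pi_div_two _).le
    have hs2 : 0 ≤ s ^ 2 := sq_nonneg s
    nlinarith [mul_nonneg hθ0 hs2, sq_nonneg lam, sq_nonneg (s * lam),
      mul_le_mul_of_nonneg_left ha1 hθ0, mul_le_mul_of_nonneg_left ha2 hθ0,
      mul_le_mul_of_nonneg_left (mul_le_mul_of_nonneg_left ha1 hθ0) hs2,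
      mul_le_mul_of_nonneg_left (mul_le_mul_of_nonneg_left ha2 hθ0) hs2]
  refine ⟨key, fun γ hγ x₂ hx₂ => ?_⟩
  have := key (-x₂) (by linarith)
  have harc : Real.arctan x₂ = -Real.arctan (-x₂) := by
    rw [Real.arctan_neg]; ring
  rw [harc]
  have : -(lam * x₂) = lam * (-x₂) := by ring
  rw [this]
  nlinarith [this]
end
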